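/- The flat 3-dimensional structure on ℝ³ defined by φ(∂x) = cosh(2z)∂z, φ(∂y) = sinh(2z)∂z, φ(∂z) = cosh(2z)∂x − sinh(2z)∂y, ξ = −sinh(2z)∂x + cosh(2z)∂y, η = sinh(2z)dx + cosh(2z)dy, g = −dx⊗dx + dy⊗dy + dz⊗dz is an almost paracontact metric structure (φ² = Id − η⊗ξ, η(ξ) = 1, g(φX,φY) = −g(X,Y)+η(X)η(Y)) which is paracontact metric (Φ = dη) with h(∂z) = −∂z ≠ 0, hence not para-Sasakian. -/

import Mathlib

noncomputable section

namespace Stmt13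

/-- Points of ℝ³ with coordinates `(x, y, z) = (p 0, p 1, p 2)`. -/
abbrev M := Fin 3 → ℝ
/-- Tangent vectors. -/
abbrev T := Fin 3 → ℝ

/-- `φ(∂x) = cosh(2z)∂z`, `φ(∂y) = sinh(2z)∂z`, `φ(∂z) = cosh(2z)∂x − sinh(2z)∂y`. -/
def phi (p : M) (v : T) : T :=
  ![Real.cosh (2 * p 2) * v 2, -(Real.sinh (2 * p 2)) * v 2,
    Real.cosh (2 * p 2) * v 0 + Real.sinh (2 * p 2) * v 1]

/-- `ξ = −sinh(2z)∂x + cosh(2z)∂y`. -/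
def xi (p : M) : T := ![-(Real.sinh (2 * p 2)), Real.cosh (2 * p 2), 0]

/-- `η = sinh(2z)dx + cosh(2z)dy`. -/
def eta (p : M) (v : T) : ℝ := Real.sinh (2 * p 2) * v 0 + Real.cosh (2 * p 2) * v 1

/-- `g = −dx⊗dx + dy⊗dy + dz⊗dz`. -/
def gM (_p : M) (v w : T) : ℝ := -(v 0 * w 0) + v 1 * w 1 + v 2 * w 2

/-- Lie bracket of vector fields on ℝ³. -/
def bracket (X Y : M → T) : M → T := fun p => fderiv ℝ Y p (X p) - fderiv ℝ X p (Y p)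

/-- `h = (1/2) L_ξ φ`. -/
def hten (X : M → T) : M → T :=
  fun p => (1 / 2 : ℝ) • (bracket xi (fun q => phi q (X q)) p - phi p (bracket xi X p))

/-- The Levi-Civita connection of the flat metric `g` (coordinatewise derivative). -/
def nab (X Y : M → T) : M → T := fun p => fderiv ℝ Y p (X p)

/-- `(∇_X φ)Y`. -/
def nablaPhi (X Y : M → T) : M → T :=
  fun p => nab X (fun q => phi q (Y q)) p - phi p (nab X Y p)

/-- The coordinate field `∂z`. -/
def ez : M → T := fun _ => ![0, 0, 1]

open Real ContinuousLinearMap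

lemma hs (p : M) : HasFDerivAt (fun q : M => Real.sinh (2 * q 2))
    ((2 * Real.cosh (2 * p 2)) • (ContinuousLinearMap.proj 2 : M →L[ℝ] ℝ)) p := by
  have h1 : HasFDerivAt (fun q : M => 2 * q 2)
      ((2:ℝ) • (ContinuousLinearMap.proj 2 : M →L[ℝ] ℝ)) p :=
    ((hasFDerivAt_apply 2 p).const_mul 2).congr_fderiv (by ext v; simp [mul_comm])
  refine ((Real.hasDerivAt_sinh (2 * p 2)).comp_hasFDerivAt p h1).congr_fderiv ?_
  ext v; simp [mul_comm, mul_assoc, mul_left_comm]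

lemma hc (p : M) : HasFDerivAt (fun q : M => Real.cosh (2 * q 2))
    ((2 * Real.sinh (2 * p 2)) • (ContinuousLinearMap.proj 2 : M →L[ℝ] ℝ)) p := by
  have h1 : HasFDerivAt (fun q : M => 2 * q 2)
      ((2:ℝ) • (ContinuousLinearMap.proj 2 : M →L[ℝ] ℝ)) p :=
    ((hasFDerivAt_apply 2 p).const_mul 2).congr_fderiv (by ext v; simp [mul_comm])
  refine ((Real.hasDerivAt_cosh (2 * p 2)).comp_hasFDerivAt p h1).congr_fderiv ?_
  ext v; simp [mul_comm, mul_assoc, mul_left_comm]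

lemma hxi (p : M) : HasFDerivAt xi (ContinuousLinearMap.pi
    ![(-(2 * Real.cosh (2 * p 2))) • (ContinuousLinearMap.proj 2 : M →L[ℝ] ℝ),
      (2 * Real.sinh (2 * p 2)) • (ContinuousLinearMap.proj 2 : M →L[ℝ] ℝ), 0]) p := by
  apply hasFDerivAt_pi''
  intro i
  fin_cases i
  · exact ((hs p).neg).congr_fderiv (by ext v; simp [xi])
  · exact (hc p).congr_fderiv (by ext v; simp [xi])
  · exact (hasFDerivAt_const (0:ℝ) p).congr_fderiv (by ext v; simp [xi])

lemma fderiv_xi (p : M) (v : T) :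
    fderiv ℝ xi p v = ![-(2 * Real.cosh (2 * p 2)) * v 2, 2 * Real.sinh (2 * p 2) * v 2, 0] := by
  rw [(hxi p).fderiv]
  funext i
  fin_cases i <;> simp

def Yf : M → T := fun q => ![Real.cosh (2 * q 2), -(Real.sinh (2 * q 2)), 0]

lemma hYf : (fun q => phi q (ez q)) = Yf := by
  funext q i
  fin_cases i <;> simp [phi, ez, Yf]

lemma hY (p : M) : HasFDerivAt Yf (ContinuousLinearMap.pi
    ![(2 * Real.sinh (2 * p 2)) • (ContinuousLinearMap.proj 2 : M →L[ℝ] ℝ),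
      (-(2 * Real.cosh (2 * p 2))) • (ContinuousLinearMap.proj 2 : M →L[ℝ] ℝ), 0]) p := by
  apply hasFDerivAt_pi''
  intro i
  fin_cases i
  · exact (hc p).congr_fderiv (by ext v; simp [Yf])
  · exact ((hs p).neg).congr_fderiv (by ext v; simp [Yf])
  · exact (hasFDerivAt_const (0:ℝ) p).congr_fderiv (by ext v; simp [Yf])

lemma fderiv_Yf (p : M) (v : T) :
    fderiv ℝ Yf p v = ![2 * Real.sinh (2 * p 2) * v 2, -(2 * Real.cosh (2 * p 2)) * v 2, 0] := by
  rw [(hY p).fderiv]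
  funext i
  fin_cases i <;> simp

lemma fderiv_ez (p : M) : fderiv ℝ ez p = 0 :=
  congrFun (fderiv_const (𝕜 := ℝ) (E := M) ![(0:ℝ), 0, 1]) p

lemma fderiv_eta (p : M) (w v : T) :
    fderiv ℝ (fun q => eta q w) p v
      = 2 * Real.cosh (2 * p 2) * v 2 * w 0 + 2 * Real.sinh (2 * p 2) * v 2 * w 1 := by
  have h := ((hs p).mul_const (w 0)).fun_add ((hc p).mul_const (w 1))
  simp only [eta]
  rw [h.fderiv]
  simp
  ring

/-- the above structure on ℝ³ is an almost paracontact metric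
structure which is paracontact metric (`Φ = dη`) with `h(∂z) = −∂z ≠ 0`,
hence not para-Sasakian. -/
theorem stmt13 :
    -- almost paracontact metric structure
    (∀ p v, phi p (phi p v) = v - eta p v • xi p) ∧
    (∀ p, eta p (xi p) = 1) ∧
    (∀ p, phi p (xi p) = 0) ∧
    (∀ p v, eta p (phi p v) = 0) ∧
    (∀ p v w, gM p (phi p v) (phi p w) = -(gM p v w) + eta p v * eta p w) ∧
    -- paracontact metric: Φ = dη (checked on constant vector fields, which span)
    (∀ p (v w : T), gM p v (phi p w)
      = (1 / 2) * (fderiv ℝ (fun q => eta q w) p v - fderiv ℝ (fun q => eta q v) p w)) ∧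
    -- h(∂z) = −∂z ≠ 0
    (∀ p, hten ez p = -(ez p)) ∧ (∃ p, hten ez p ≠ 0) ∧
    -- hence not para-Sasakian
    ¬ (∀ X Y : M → T, ContDiff ℝ (⊤ : ℕ∞) X → ContDiff ℝ (⊤ : ℕ∞) Y → ∀ p,
        nablaPhi X Y p = -(gM p (X p) (Y p)) • xi p + eta p (Y p) • X p) := by
  have key : ∀ x : ℝ, Real.cosh x ^ 2 - Real.sinh x ^ 2 = 1 := Real.cosh_sq_sub_sinh_sq
  have hall : ∀ p, hten ez p = -(ez p) := by
    intro p
    have hbr : bracket xi ez p = ![2 * Real.cosh (2 * p 2), -(2 * Real.sinh (2 * p 2)), 0] := by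
      funext i
      simp only [bracket, fderiv_ez, Pi.sub_apply, ContinuousLinearMap.zero_apply]
      rw [fderiv_xi]
      fin_cases i <;> simp [ez]
    have hbr2 : bracket xi (fun q => phi q (ez q)) p = 0 := by
      rw [hYf]
      funext i
      simp only [bracket, Pi.sub_apply]
      rw [fderiv_Yf, fderiv_xi]
      fin_cases i <;> simp [xi, Yf]
    funext i
    rw [hten, hbr, hbr2]
    fin_cases i
    · simp [phi, ez]
    · simp [phi, ez]
    · simp [phi, ez]; linear_combination -key (2 * p 2)
  refine ⟨?_, ?_, ?_, ?_, ?_, ?_, ?_, ?_, ?_⟩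
  · intro p v
    funext i
    fin_cases i
    · simp [phi, eta, xi]; linear_combination (v 0) * key (2 * p 2)
    · simp [phi, eta, xi]; linear_combination (v 1) * key (2 * p 2)
    · simp [phi, eta, xi]; linear_combination (v 2) * key (2 * p 2)
  · intro p
    simp [eta, xi]
    nlinarith [key (2 * p 2)]
  · intro p
    funext i
    fin_cases i <;> simp [phi, xi] <;> ring
  · intro p v
    simp [eta, phi]
    ring
  · intro p v w
    simp [gM, phi, eta]
    linear_combination (v 0 * w 0 - v 1 * w 1 - v 2 * w 2) * key (2 * p 2)
  · intro p v w
    rw [fderiv_eta, fderiv_eta]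
    simp [gM, phi]
    ring
  · exact hall
  · refine ⟨0, fun h => ?_⟩
    rw [hall 0] at h
    have := congrFun h 2
    simp [ez] at this
  · intro H
    have h := H ez ez contDiff_const contDiff_const 0
    have h1 := congrFun h 1
    rw [nablaPhi, hYf] at h1
    have hn : nab ez Yf 0 = fderiv ℝ Yf 0 (ez 0) := rfl
    have hn2 : nab ez ez 0 = 0 := by
      simp [nab, fderiv_ez]
    rw [hn, hn2, fderiv_Yf] at h1
    simp [phi, ez, gM, eta, xi] at h1


end Stmt13
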